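/- There exists a function delete from flat Plebeia trees and keys to optional flat Plebeia trees such that for every tree t satisfying the structural invariants (SI1) and (SI2) and every key k: if k ∈ DOM(t) and DOM(t) ≠ {k}, then delete(t, k) = Some t' for some tree t' satisfying the structural invariants with ⟦t'⟧(k) undefined and ⟦t'⟧(k') = ⟦t⟧(k') for every key k' ≠ k; and if k ∉ DOM(t), then delete(t, k) = None. (The case DOM(t) = {k} is excluded because the flat node type cannot represent the empty tree; in the full implementation this case is handled by a Bud node with empty contents.) -/
import Mathlib


/-- A side is `L` or `R`. -/
inductive Side : Type
  | L | R
deriving DecidableEq, Repr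

/-- A key is a list of sides. -/
abbrev Key := List Side

/-- The strict order `L < R` on sides. -/
def Side.lt : Side → Side → Prop := fun a b => a = Side.L ∧ b = Side.R

/-- The strict lexicographic order on keys induced by `L < R`. -/
def keyLt : Key → Key → Prop := List.Lex Side.lt

/-- A list of keys is prefix-free: for any two distinct keys in it,
neither is a prefix of the other. -/
def PrefixFreeList (ks : List Key) : Prop :=
  List.Pairwise (fun a b => ¬ a <+: b ∧ ¬ b <+: a) ks

/-- A set of keys is prefix-free. -/
def PrefixFreeSet (S : Set Key) : Prop :=
  ∀ a ∈ S, ∀ b ∈ S, a ≠ b → ¬ a <+: b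

/-- A list of keys is strictly increasing in the lexicographic order. -/
def SortedKeys (ks : List Key) : Prop := List.Pairwise keyLt ks

/-- Key list of an association list is prefix-free and strictly increasing. -/
def GoodKeyList (ks : List Key) : Prop := PrefixFreeList ks ∧ SortedKeys ks

/-- Prepend the key `s` to the key of every entry. -/
def prependAll {β : Type _} (s : Key) (l : List (Key × β)) : List (Key × β) :=
  l.map (fun e => (s ++ e.1, e.2))

/-- `lookup l k` is `some` of the value of the first entry of `l` with key `k`. -/
def lookupA {β : Type _} (l : List (Key × β)) (k : Key) : Option β :=
  (l.find? (fun e => decide (e.1 = k))).map Prod.snd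
/-- Flat Plebeia trees over a value type `α`. -/
inductive FNode (α : Type) : Type
  | leaf : α → FNode α
  | branch : FNode α → FNode α → FNode α
  | extender : Key → FNode α → FNode α

variable {α : Type}

def FNode.isExtender : FNode α → Prop
  | .extender _ _ => True
  | _ => False

/-- The model `⟦t⟧ : key ⇀ α` of a flat Plebeia tree, as a function into `Option`. -/
def FNode.model : FNode α → Key → Option α
  | .leaf v, [] => some v
  | .leaf _, _ :: _ => none
  | .branch l _, Side.L :: k => l.model k
  | .branch _ r, Side.R :: k => r.model k
  | .branch _ _, [] => none
  | .extender s n, k => if s <+: k then n.model (k.drop s.length) else none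

/-- `DOM t`: the set of keys on which `⟦t⟧` is defined. -/
def FNode.dom (t : FNode α) : Set Key := {k | (t.model k).isSome}

/-- Structural invariants (SI1), (SI2) at every subtree:
no extender has an extender as direct child, and no extender has an empty key. -/
def FNode.inv : FNode α → Prop
  | .leaf _ => True
  | .branch l r => l.inv ∧ r.inv
  | .extender s n => (¬ n.isExtender) ∧ s ≠ [] ∧ n.inv
namespace Stmt8Aux

/-- Smart extender constructor keeping the invariants. -/
def mkext (s : Key) : FNode α → FNode α
  | .extender s' n => .extender (s ++ s') n
  | .leaf v => if s = [] then .leaf v else .extender s (.leaf v)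
  | .branch l r => if s = [] then .branch l r else .extender s (.branch l r)

lemma mkext_inv (s : Key) (n : FNode α) (h : n.inv) : (mkext s n).inv := by
  cases n with
  | leaf v =>
      by_cases hs : s = [] <;>
        simp [mkext, hs, FNode.inv, FNode.isExtender]
  | branch l r =>
      by_cases hs : s = [] <;>
        simpa [mkext, hs, FNode.inv, FNode.isExtender] using h
  | extender s' n' =>
      obtain ⟨h1, h2, h3⟩ := h
      exact ⟨h1, by simp [h2], h3⟩

lemma model_ext (s : Key) (n : FNode α) (k : Key) :
    (FNode.extender s n).model k =
      if s <+: k then n.model (k.drop s.length) else none := rfl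

lemma mkext_model (s : Key) (n : FNode α) (k : Key) :
    (mkext s n).model k = if s <+: k then n.model (k.drop s.length) else none := by
  cases n with
  | leaf v =>
      by_cases hs : s = []
      · subst hs; simp [mkext]
      · simp [mkext, hs, model_ext]
  | branch l r =>
      by_cases hs : s = []
      · subst hs; simp [mkext]
      · simp [mkext, hs, model_ext]
  | extender s' n' =>
      simp only [mkext, model_ext]
      by_cases hs : s <+: k
      · obtain ⟨k2, rfl⟩ := hs
        simp only [if_pos (List.prefix_append s k2)]
        rw [List.drop_left]
        by_cases hs' : s' <+: k2
        · obtain ⟨k3, rfl⟩ := hs'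
          rw [if_pos, if_pos (List.prefix_append s' k3)]
          · rw [List.length_append, ← List.append_assoc]
            rw [show s.length + s'.length = (s ++ s').length by simp,
              List.drop_left, List.drop_left]
          · rw [← List.append_assoc]; exact List.prefix_append _ _
        · rw [if_neg hs', if_neg]
          intro hc
          exact hs' (by
            have := (List.prefix_append_right_inj s).mp
              (by simpa [List.append_assoc] using hc)
            exact this)
      · rw [if_neg hs, if_neg]
        intro hc
        exact hs (((List.prefix_append s s').trans hc))

def del' : FNode α → Key → Option (Option (FNode α))
  | .leaf _, [] => some none
  | .leaf _, _ :: _ => none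
  | .branch _ _, [] => none
  | .branch l r, Side.L :: k =>
      (del' l k).map (fun o => match o with
        | none => some (mkext [Side.R] r)
        | some l' => some (.branch l' r))
  | .branch l r, Side.R :: k =>
      (del' r k).map (fun o => match o with
        | none => some (mkext [Side.L] l)
        | some r' => some (.branch l r'))
  | .extender s n, k =>
      if s <+: k then
        (del' n (k.drop s.length)).map (fun o => o.map (mkext s))
      else none

lemma del'_spec (t : FNode α) (ht : t.inv) (k : Key) :
    (t.model k = none → del' t k = none) ∧
    ((t.model k).isSome →
      (del' t k = some none ∧ ∀ k', (t.model k').isSome → k' = k) ∨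
      (∃ t', del' t k = some (some t') ∧ t'.inv ∧ t'.model k = none ∧
        ∀ k', k' ≠ k → t'.model k' = t.model k')) := by
  induction t generalizing k with
  | leaf v =>
      cases k with
      | nil =>
          refine ⟨by simp [FNode.model], fun _ => Or.inl ⟨rfl, ?_⟩⟩
          intro k' hk'
          cases k' with
          | nil => rfl
          | cons a l => simp [FNode.model] at hk'
      | cons a l => simp [FNode.model, del']
  | branch l r ihl ihr =>
      obtain ⟨hl, hr⟩ := ht
      cases k with
      | nil => simp [FNode.model, del']
      | cons a k =>
          cases a with
          | L =>
              have hm : (FNode.branch l r).model (Side.L :: k) = l.model k := rfl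
              constructor
              · intro h0
                rw [hm] at h0
                simp [del', (ihl hl k).1 h0]
              · intro hsome
                rw [hm] at hsome
                rcases (ihl hl k).2 hsome with ⟨hd, huniq⟩ | ⟨l', hd, hinv, hnone, hrest⟩
                · refine Or.inr ⟨mkext [Side.R] r, ?_, mkext_inv _ _ hr, ?_, ?_⟩
                  · simp [del', hd]
                  · rw [mkext_model, if_neg (by intro h; simp [List.cons_prefix_cons] at h)]
                  · intro k' hk'
                    rw [mkext_model]
                    cases k' with
                    | nil => simp [FNode.model]
                    | cons b k'' =>
                        cases b with
                        | L =>
                            rw [if_neg (by intro h; simp [List.cons_prefix_cons] at h)]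
                            have : k'' ≠ k := by intro h; exact hk' (by rw [h])
                            have : l.model k'' = none := by
                              by_contra hc
                              exact this (huniq k'' (Option.isSome_iff_ne_none.mpr hc))
                            simpa [FNode.model] using this.symm
                        | R =>
                            rw [if_pos (by simp [List.cons_prefix_cons])]
                            rfl
                · refine Or.inr ⟨FNode.branch l' r, ?_, ⟨hinv, hr⟩, hnone, ?_⟩
                  · simp [del', hd]
                  · intro k' hk'
                    cases k' with
                    | nil => rfl
                    | cons b k'' =>
                        cases b with
                        | L =>
                            have : k'' ≠ k := by intro h; exact hk' (by rw [h])
                            exact hrest k'' this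
                        | R => rfl
          | R =>
              have hm : (FNode.branch l r).model (Side.R :: k) = r.model k := rfl
              constructor
              · intro h0
                rw [hm] at h0
                simp [del', (ihr hr k).1 h0]
              · intro hsome
                rw [hm] at hsome
                rcases (ihr hr k).2 hsome with ⟨hd, huniq⟩ | ⟨r', hd, hinv, hnone, hrest⟩
                · refine Or.inr ⟨mkext [Side.L] l, ?_, mkext_inv _ _ hl, ?_, ?_⟩
                  · simp [del', hd]
                  · rw [mkext_model]
                    rw [if_neg (by intro h; simp [List.cons_prefix_cons] at h)]
                  · intro k' hk'
                    rw [mkext_model]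
                    cases k' with
                    | nil => simp [FNode.model]
                    | cons b k'' =>
                        cases b with
                        | R =>
                            rw [if_neg (by intro h; simp [List.cons_prefix_cons] at h)]
                            have hne : k'' ≠ k := by intro h; exact hk' (by rw [h])
                            have : r.model k'' = none := by
                              by_contra hc
                              exact hne (huniq k'' (Option.isSome_iff_ne_none.mpr hc))
                            simpa [FNode.model] using this.symm
                        | L =>
                            rw [if_pos (by simp [List.cons_prefix_cons])]
                            rfl
                · refine Or.inr ⟨FNode.branch l r', ?_, ⟨hl, hinv⟩, hnone, ?_⟩
                  · simp [del', hd]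
                  · intro k' hk'
                    cases k' with
                    | nil => rfl
                    | cons b k'' =>
                        cases b with
                        | R =>
                            have : k'' ≠ k := by intro h; exact hk' (by rw [h])
                            exact hrest k'' this
                        | L => rfl
  | extender s n ihn =>
      obtain ⟨h1, hs, hn⟩ := ht
      by_cases hp : s <+: k
      · obtain ⟨k2, rfl⟩ := hp
        have hm : (FNode.extender s n).model (s ++ k2) = n.model k2 := by
          rw [model_ext, if_pos (List.prefix_append s k2), List.drop_left]
        constructor
        · intro h0
          rw [hm] at h0
          simp [del', List.prefix_append, List.drop_left, (ihn hn k2).1 h0]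
        · intro hsome
          rw [hm] at hsome
          rcases (ihn hn k2).2 hsome with ⟨hd, huniq⟩ | ⟨n', hd, hinv, hnone, hrest⟩
          · refine Or.inl ⟨?_, ?_⟩
            · simp [del', List.prefix_append, List.drop_left, hd]
            · intro k' hk'
              rw [model_ext] at hk'
              by_cases hp' : s <+: k'
              · obtain ⟨k3, rfl⟩ := hp'
                rw [if_pos (List.prefix_append s k3), List.drop_left] at hk'
                rw [huniq k3 hk']
              · simp [if_neg hp'] at hk'
          · refine Or.inr ⟨mkext s n', ?_, mkext_inv _ _ hinv, ?_, ?_⟩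
            · simp [del', List.prefix_append, List.drop_left, hd]
            · rw [mkext_model, if_pos (List.prefix_append s k2), List.drop_left, hnone]
            · intro k' hk'
              rw [mkext_model, model_ext]
              by_cases hp' : s <+: k'
              · obtain ⟨k3, rfl⟩ := hp'
                rw [if_pos (List.prefix_append s k3), if_pos (List.prefix_append s k3),
                  List.drop_left]
                exact hrest k3 (by intro h; exact hk' (by rw [h]))
              · rw [if_neg hp', if_neg hp']
      · refine ⟨fun _ => by simp [del', hp], fun hsome => ?_⟩
        rw [model_ext, if_neg hp] at hsome
        simp at hsome

end Stmt8Aux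
/-- there is a `delete` function on flat Plebeia trees that,
on trees satisfying the structural invariants, succeeds when the key is in the
domain and is not the only element of the domain, in which case it removes `k`
from the model and preserves the invariants; if the key is not in the domain it
returns `none`. -/
theorem stmt8 {α : Type} :
    ∃ del : FNode α → Key → Option (FNode α),
      ∀ (t : FNode α) (k : Key), t.inv →
        ((k ∈ t.dom ∧ t.dom ≠ {k}) →
          ∃ t' : FNode α, del t k = some t' ∧ t'.inv ∧
            t'.model k = none ∧ ∀ k' : Key, k' ≠ k → t'.model k' = t.model k') ∧
        (k ∉ t.dom → del t k = none) := by
  refine ⟨fun t k => match Stmt8Aux.del' t k with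
    | some (some t') => some t'
    | _ => none, ?_⟩
  intro t k ht
  constructor
  · rintro ⟨hk, hne⟩
    have hsome : (t.model k).isSome := hk
    rcases (Stmt8Aux.del'_spec t ht k).2 hsome with ⟨hd, huniq⟩ | ⟨t', hd, hinv, hnone, hrest⟩
    · exact absurd (Set.eq_singleton_iff_unique_mem.mpr ⟨hk, fun k' hk' => huniq k' hk'⟩) hne
    · exact ⟨t', by simp [hd], hinv, hnone, hrest⟩
  · intro hk
    have h0 : t.model k = none := Option.not_isSome_iff_eq_none.mp hk
    simp [(Stmt8Aux.del'_spec t ht k).1 h0]
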